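/- Let U, X be jointly distributed finite random variables, let Y = f(X) for a deterministic function f, suppose X = g(Y, U) for a deterministic function g, let S ~ Bernoulli(p) be independent of (U, X), and set Z = X if S = 0 and Z = ? if S = 1. Then I(U; Z) = (1−p)·I(U; Y) + (1−p)·H(X | Y), and consequently I(U; Z) ≤ (1−p)·I(U; Y) + (1−p)·∑_{y} P(Y = y)·log₂ |X_y|, where X_y = { x : f(x) = y }. -/

import Mathlib

open Finset
open scoped Classical

noncomputable section

/-- Probability that the random variable `X` takes the value `a`, under the
probability mass function `μ` on the finite sample space `Ω`. -/
def pr {Ω α : Type*} [Fintype Ω] (μ : Ω → ℝ) (X : Ω → α) (a : α) : ℝ :=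
  ∑ ω, if X ω = a then μ ω else 0

/-- `μ` is a probability mass function. -/
def IsPMF {Ω : Type*} [Fintype Ω] (μ : Ω → ℝ) : Prop :=
  (∀ ω, 0 ≤ μ ω) ∧ ∑ ω, μ ω = 1

/-- Shannon entropy (base 2) of a finite random variable. -/
def ent {Ω α : Type*} [Fintype Ω] [Fintype α] (μ : Ω → ℝ) (X : Ω → α) : ℝ :=
  -∑ a, pr μ X a * Real.logb 2 (pr μ X a)

/-- Mutual information `I(X;Y)` (base 2). -/
def mi {Ω α β : Type*} [Fintype Ω] [Fintype α] [Fintype β]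
    (μ : Ω → ℝ) (X : Ω → α) (Y : Ω → β) : ℝ :=
  ent μ X + ent μ Y - ent μ (fun ω => (X ω, Y ω))

/-- Conditional entropy `H(X|Y)` (base 2). -/
def cent {Ω α β : Type*} [Fintype Ω] [Fintype α] [Fintype β]
    (μ : Ω → ℝ) (X : Ω → α) (Y : Ω → β) : ℝ :=
  ent μ (fun ω => (X ω, Y ω)) - ent μ Y

/-- Conditional mutual information `I(X;Y|Z)` (base 2). -/
def cmi {Ω α β γ : Type*} [Fintype Ω] [Fintype α] [Fintype β] [Fintype γ]
    (μ : Ω → ℝ) (X : Ω → α) (Y : Ω → β) (Z : Ω → γ) : ℝ :=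
  ent μ (fun ω => (X ω, Z ω)) + ent μ (fun ω => (Y ω, Z ω))
    - ent μ (fun ω => (X ω, Y ω, Z ω)) - ent μ Z

/-- Independence of two finite random variables. -/
def IndepRV {Ω α β : Type*} [Fintype Ω] (μ : Ω → ℝ) (X : Ω → α) (Y : Ω → β) : Prop :=
  ∀ a b, pr μ (fun ω => (X ω, Y ω)) (a, b) = pr μ X a * pr μ Y b

/-! Erasing `X` independently of `(U, X)` with probability `p` turns the law of `(U, Z)` into a
mixture whose erased branch carries only `U`; expanding entropies with
`negMulLog (a * b) = b * negMulLog a + a * negMulLog b` gives `I(U;Z) = (1 - p) I(U;X)`.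
Since `Y = f(X)` and `X = g(Y, U)`, the pairs `(U, X)` and `(U, Y)` determine each other, whence
`I(U;X) = I(U;Y) + H(X|Y)`. Finally `H(X | Y = y) ≤ log₂ |X_y|` is Jensen's inequality for the
concave function `t ↦ -t log t` on the fibre `X_y`. -/

open Real

section

variable {Ω δ ε : Type*} [Fintype Ω] {μ : Ω → ℝ}

lemma pr_nonneg (hμ : ∀ ω, 0 ≤ μ ω) (W : Ω → δ) (d : δ) : 0 ≤ pr μ W d :=
  Finset.sum_nonneg fun ω _ => by split <;> simp [hμ ω]

lemma sum_pr_eq_one [Fintype δ] (hμ : ∑ ω, μ ω = 1) (W : Ω → δ) : ∑ d, pr μ W d = 1 := by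
  unfold pr
  rw [Finset.sum_comm]
  simpa using hμ

lemma pr_false_eq_one_sub (hμ : ∑ ω, μ ω = 1) (S : Ω → Bool) :
    pr μ S false = 1 - pr μ S true := by
  have := sum_pr_eq_one hμ S
  rw [Fintype.sum_bool] at this
  linarith

lemma pr_comp_eq_sum [Fintype δ] (W : Ω → δ) (k : δ → ε) (e : ε) :
    pr μ (fun ω => k (W ω)) e = ∑ d with k d = e, pr μ W d := by
  unfold pr
  rw [Finset.sum_comm]
  refine Finset.sum_congr rfl fun ω _ => ?_
  by_cases h : k (W ω) = e <;> simp [h]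

lemma pr_pair_comp_eq_sum [Fintype δ] {ζ : Type*} (V : Ω → ε) (W : Ω → δ) (k : δ → ζ)
    (a : ε) (e : ζ) :
    pr μ (fun ω => (V ω, k (W ω))) (a, e)
      = ∑ d with k d = e, pr μ (fun ω => (V ω, W ω)) (a, d) := by
  unfold pr
  rw [Finset.sum_comm]
  refine Finset.sum_congr rfl fun ω _ => ?_
  by_cases h : k (W ω) = e <;> by_cases h' : V ω = a <;> simp [h, h']

lemma pr_pair_comp (W : Ω → δ) (k : δ → ε) (d : δ) (e : ε) :
    pr μ (fun ω => (W ω, k (W ω))) (d, e) = if k d = e then pr μ W d else 0 := by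
  unfold pr
  split_ifs with h
  · exact Finset.sum_congr rfl fun ω _ => by by_cases hω : W ω = d <;> simp_all
  · exact Finset.sum_eq_zero fun ω _ => by by_cases hω : W ω = d <;> simp_all

lemma IndepRV.comp [Fintype δ] {ζ : Type*} {V : Ω → ε} {W : Ω → δ} (h : IndepRV μ V W)
    (k : δ → ζ) :
    IndepRV μ V (fun ω => k (W ω)) := by
  intro a e
  rw [pr_pair_comp_eq_sum, pr_comp_eq_sum W k, Finset.mul_sum]
  exact Finset.sum_congr rfl fun d _ => h a d

lemma ent_eq_sum_negMulLog [Fintype δ] (W : Ω → δ) :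
    ent μ W = (∑ d, negMulLog (pr μ W d)) / log 2 := by
  simp only [ent, negMulLog, logb, Finset.sum_div]
  rw [← Finset.sum_neg_distrib]
  exact Finset.sum_congr rfl fun d _ => by ring

lemma ent_comp_of_injective [Fintype δ] [Fintype ε] (W : Ω → δ) {k : δ → ε}
    (hk : Function.Injective k) : ent μ (fun ω => k (W ω)) = ent μ W := by
  rw [ent_eq_sum_negMulLog, ent_eq_sum_negMulLog]
  congr 1
  refine (Fintype.sum_of_injective k hk _ _ (fun e he => ?_) fun d => ?_).symm
  · rw [pr_comp_eq_sum W k,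
      Finset.sum_eq_zero fun d hd => absurd ⟨d, (Finset.mem_filter.1 hd).2⟩ he, negMulLog_zero]
  · rw [pr_comp_eq_sum W k, Finset.sum_eq_single_of_mem d (by simp)
      fun d' hd' hne => absurd (hk (Finset.mem_filter.1 hd').2) hne]

lemma ent_pair_of_comp [Fintype δ] [Fintype ε] {W : Ω → δ} {V : Ω → ε} {k : δ → ε}
    (hV : ∀ ω, V ω = k (W ω)) : ent μ (fun ω => (W ω, V ω)) = ent μ W := by
  simp_rw [hV]
  exact ent_comp_of_injective W (k := fun d => (d, k d)) fun d d' h => (Prod.ext_iff.1 h).1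

lemma ent_eq_of_comp_of_comp [Fintype δ] [Fintype ε] {W : Ω → δ} {V : Ω → ε} {k : δ → ε}
    {l : ε → δ} (hV : ∀ ω, V ω = k (W ω)) (hW : ∀ ω, W ω = l (V ω)) : ent μ W = ent μ V := by
  rw [← ent_pair_of_comp hV, ← ent_pair_of_comp hW,
    ← ent_comp_of_injective (fun ω => (W ω, V ω)) Prod.swap_injective]
  rfl

lemma sum_negMulLog_const_mul [Fintype δ] {q : δ → ℝ} (hq : ∑ d, q d = 1) (c : ℝ) :
    ∑ d, negMulLog (c * q d) = negMulLog c + c * ∑ d, negMulLog (q d) := by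
  simp only [negMulLog_mul, Finset.sum_add_distrib, ← Finset.sum_mul, ← Finset.mul_sum, hq,
    one_mul]

-- `none` plays the role of the erasure symbol `?`.
def erasure (S : Ω → Bool) (W : Ω → δ) (ω : Ω) : Option δ :=
  if S ω then none else some (W ω)

section erasure

variable (S : Ω → Bool) (W : Ω → δ)

lemma pr_erasure_none : pr μ (erasure S W) none = pr μ S true :=
  Finset.sum_congr rfl fun ω _ => by by_cases h : S ω <;> simp [erasure, h]

lemma pr_erasure_some (w : δ) :
    pr μ (erasure S W) (some w) = pr μ (fun ω => (S ω, W ω)) (false, w) :=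
  Finset.sum_congr rfl fun ω _ => by by_cases h : S ω <;> simp [erasure, h]

lemma pr_pair_erasure_none (V : Ω → ε) (v : ε) :
    pr μ (fun ω => (V ω, erasure S W ω)) (v, none) = pr μ (fun ω => (S ω, V ω)) (true, v) :=
  Finset.sum_congr rfl fun ω _ => by by_cases h : S ω <;> simp [erasure, h, and_comm]

lemma pr_pair_erasure_some (V : Ω → ε) (v : ε) (w : δ) :
    pr μ (fun ω => (V ω, erasure S W ω)) (v, some w)
      = pr μ (fun ω => (S ω, V ω, W ω)) (false, v, w) :=
  Finset.sum_congr rfl fun ω _ => by by_cases h : S ω <;> simp [erasure, h, and_comm]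

variable [Fintype δ] [Fintype ε]

lemma ent_erasure (hμ : ∑ ω, μ ω = 1) (hind : IndepRV μ S W) :
    ent μ (erasure S W)
      = binEntropy (pr μ S true) / log 2 + (1 - pr μ S true) * ent μ W := by
  have hsome : ∀ w, pr μ (erasure S W) (some w) = (1 - pr μ S true) * pr μ W w := fun w => by
    rw [pr_erasure_some, hind, pr_false_eq_one_sub hμ]
  simp only [ent_eq_sum_negMulLog, Fintype.sum_option, pr_erasure_none, hsome,
    sum_negMulLog_const_mul (sum_pr_eq_one hμ W), binEntropy_eq_negMulLog_add_negMulLog_one_sub]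
  ring

lemma ent_pair_erasure (hμ : ∑ ω, μ ω = 1) (V : Ω → ε)
    (hind : IndepRV μ S (fun ω => (V ω, W ω))) :
    ent μ (fun ω => (V ω, erasure S W ω))
      = binEntropy (pr μ S true) / log 2 + pr μ S true * ent μ V
        + (1 - pr μ S true) * ent μ (fun ω => (V ω, W ω)) := by
  have hnone : ∀ v, pr μ (fun ω => (V ω, erasure S W ω)) (v, none) = pr μ S true * pr μ V v :=
    fun v => by rw [pr_pair_erasure_none, hind.comp Prod.fst]
  have hsome : ∀ v w, pr μ (fun ω => (V ω, erasure S W ω)) (v, some w)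
      = (1 - pr μ S true) * pr μ (fun ω => (V ω, W ω)) (v, w) := fun v w => by
    rw [pr_pair_erasure_some, hind, pr_false_eq_one_sub hμ]
  simp only [ent_eq_sum_negMulLog, Fintype.sum_prod_type, Fintype.sum_option, hnone, hsome,
    Finset.sum_add_distrib]
  rw [sum_negMulLog_const_mul (sum_pr_eq_one hμ V), ← Fintype.sum_prod_type
    (fun t => negMulLog ((1 - pr μ S true) * pr μ (fun ω => (V ω, W ω)) t)),
    sum_negMulLog_const_mul (sum_pr_eq_one hμ _), Fintype.sum_prod_type,
    binEntropy_eq_negMulLog_add_negMulLog_one_sub]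
  ring

lemma mi_erasure (hμ : ∑ ω, μ ω = 1) (V : Ω → ε)
    (hind : IndepRV μ S (fun ω => (V ω, W ω))) :
    mi μ V (erasure S W) = (1 - pr μ S true) * mi μ V W := by
  rw [mi, mi, ent_pair_erasure S W hμ V hind, ent_erasure S W hμ (hind.comp Prod.snd)]
  ring

end erasure

lemma sum_negMulLog_le_negMulLog_sum_add_mul_log_card {κ : Type*} (T : Finset κ) {q : κ → ℝ}
    (hq : ∀ x ∈ T, 0 ≤ q x) :
    ∑ x ∈ T, negMulLog (q x) ≤ negMulLog (∑ x ∈ T, q x) + (∑ x ∈ T, q x) * log #T := by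
  rcases T.eq_empty_or_nonempty with rfl | hT
  · simp
  have hn : (0 : ℝ) < #T := by exact_mod_cast hT.card_pos
  have jensen := concaveOn_negMulLog.le_map_sum (t := T) (w := fun _ => (#T : ℝ)⁻¹) (p := q)
    (fun _ _ => by positivity) (by simp [hn.ne']) (fun x hx => Set.mem_Ici.2 (hq x hx))
  simp only [smul_eq_mul, ← Finset.mul_sum] at jensen
  rw [negMulLog_mul, negMulLog, log_inv] at jensen
  have := mul_le_mul_of_nonneg_left jensen hn.le
  field_simp at this
  linarith

lemma cent_le_sum_pr_mul_logb_card {β γ : Type*} [Fintype β] [Fintype γ] (hμ : ∀ ω, 0 ≤ μ ω)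
    {X : Ω → β} {Y : Ω → γ} {f : β → γ} (hf : ∀ ω, Y ω = f (X ω)) :
    cent μ X Y ≤ ∑ y, pr μ Y y * logb 2 #{x | f x = y} := by
  obtain rfl : Y = fun ω => f (X ω) := funext hf
  have hfiber : ∀ y, ∑ x, negMulLog (pr μ (fun ω => (X ω, f (X ω))) (x, y))
      = ∑ x with f x = y, negMulLog (pr μ X x) := fun y => by
    simp only [pr_pair_comp, Finset.sum_filter]
    exact Finset.sum_congr rfl fun x _ => by split_ifs <;> simp
  simp only [cent, ent_eq_sum_negMulLog, logb, ← sub_div, ← mul_div_assoc, ← Finset.sum_div]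
  refine div_le_div_of_nonneg_right ?_ (log_nonneg one_le_two)
  rw [Fintype.sum_prod_type_right, ← Finset.sum_sub_distrib]
  refine Finset.sum_le_sum fun y _ => ?_
  rw [hfiber, pr_comp_eq_sum X f]
  linarith [sum_negMulLog_le_negMulLog_sum_add_mul_log_card {x | f x = y}
    fun x _ => pr_nonneg hμ X x]

lemma mi_eq_mi_add_cent {α β γ : Type*} [Fintype α] [Fintype β] [Fintype γ] {U : Ω → α}
    {X : Ω → β} {Y : Ω → γ} {f : β → γ} {g : γ → α → β} (hf : ∀ ω, Y ω = f (X ω))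
    (hg : ∀ ω, X ω = g (Y ω) (U ω)) :
    mi μ U X = mi μ U Y + cent μ X Y := by
  have hXY : ent μ (fun ω => (X ω, Y ω)) = ent μ X := ent_pair_of_comp hf
  have hUX : ent μ (fun ω => (U ω, X ω)) = ent μ (fun ω => (U ω, Y ω)) :=
    ent_eq_of_comp_of_comp (k := fun t => (t.1, f t.2)) (l := fun t => (t.1, g t.2 t.1))
      (fun ω => by simp [hf]) (fun ω => by simp [hg])
  rw [mi, mi, cent, hXY, hUX]
  ring

end

/-- If `Y = f(X)`, `X = g(Y,U)`, `S ~ Bernoulli(p)` is independent of `(U,X)`,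
and `Z` is the erasure of `X` by `S`, then
`I(U;Z) = (1−p)·I(U;Y) + (1−p)·H(X|Y)`, and consequently
`I(U;Z) ≤ (1−p)·I(U;Y) + (1−p)·∑_y P(Y=y)·log₂|X_y|` where `X_y = f⁻¹(y)`. -/
theorem stmt13 {Ω α β γ : Type*} [Fintype Ω] [Fintype α] [Fintype β] [Fintype γ]
    (μ : Ω → ℝ) (hμ : IsPMF μ) (U : Ω → α) (X : Ω → β) (Y : Ω → γ)
    (f : β → γ) (hf : ∀ ω, Y ω = f (X ω))
    (g : γ → α → β) (hg : ∀ ω, X ω = g (Y ω) (U ω))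
    (S : Ω → Bool) (p : ℝ) (hp : p ∈ Set.Icc (0:ℝ) 1) (hS : pr μ S true = p)
    (hindep : IndepRV μ S (fun ω => (U ω, X ω))) :
    mi μ U (fun ω => if S ω then (none : Option β) else some (X ω))
        = (1 - p) * mi μ U Y + (1 - p) * cent μ X Y ∧
    mi μ U (fun ω => if S ω then (none : Option β) else some (X ω))
        ≤ (1 - p) * mi μ U Y
          + (1 - p) * ∑ y, pr μ Y y
              * Real.logb 2 ((Finset.univ.filter (fun x => f x = y)).card : ℝ) := by
  obtain ⟨hμ0, hμ1⟩ := hμ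
  have hZ : mi μ U (erasure S X) = (1 - p) * mi μ U Y + (1 - p) * cent μ X Y := by
    rw [mi_erasure S X hμ1 U hindep, hS, mi_eq_mi_add_cent hf hg, mul_add]
  have hcent := mul_le_mul_of_nonneg_left (cent_le_sum_pr_mul_logb_card hμ0 hf)
    (sub_nonneg.2 hp.2)
  exact ⟨hZ, hZ.trans_le (by linarith)⟩
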